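/- Let d = 2 and define the expected soft-Dice loss L(c_1, c_2) = E[1 − 2(Y_1 c_1 + Y_2 c_2)/(Y_1 + Y_2 + c_1 + c_2)] for (c_1, c_2) ∈ [0,1]², with the convention 0/0 := 0 (which only occurs when Y = (0,0) and c = (0,0), where the summand's correction term vanishes). Then for (c_1, c_2) with c_1 + c_2 > 0, ∂L/∂c_1 = −2[ 2 p_1 p_2/(2 + c_1 + c_2)² + (p_1(1−p_2) + (p_1 − p_2) c_2)/(1 + c_1 + c_2)² ]. Consequently, if p_1 ≥ p_2 and 2 p_2 − p_1 − p_1 p_2 ≥ 0, then L is nonincreasing in each coordinate on [0,1]², and (c_1, c_2) = (1,1) minimizes L over [0,1]². -/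

import Mathlib

/-!
Summing over the four outcomes of `Y`, the risk is `1 - 2 (p₁p₂ (c₁+c₂)/(2+c₁+c₂) +
(p₁(1-p₂) c₁ + (1-p₁)p₂ c₂)/(1+c₁+c₂))`, so in each coordinate it is a sum of two Möbius
functions `t ↦ (a t + b)/(t + d)`, whose derivative is `(a d - b)/(t + d)²`. The numerator
`p₁(1-p₂) + (p₁-p₂)c₂` of the `c₁`-partial is nonnegative when `p₂ ≤ p₁`; swapping the roles
of the coordinates, the numerator of the `c₂`-partial is affine in `c₁`, equal to `(1-p₁)p₂`
at `c₁ = 0` and to `2p₂ - p₁ - p₁p₂` at `c₁ = 1`. Both partials are then nonpositive on the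
square, so the risk decreases towards the corner `(1, 1)`.
-/

/-- The expected soft-Dice loss for `d = 2`:
`L(c₁, c₂) = E[1 - 2(Y₁c₁ + Y₂c₂)/(Y₁ + Y₂ + c₁ + c₂)]`, where `Y₁, Y₂` are independent
Bernoulli with success probabilities `p₁, p₂` (the convention `0/0 := 0` is Lean's
division; it only matters for the `Y = (0,0)` term, whose correction vanishes). -/
noncomputable def softDiceRisk (p1 p2 c1 c2 : ℝ) : ℝ :=
  ∑ y : Fin 2 → Bool,
    ((if y 0 then p1 else 1 - p1) * (if y 1 then p2 else 1 - p2)) *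
      (1 - 2 * ((if y 0 then c1 else 0) + (if y 1 then c2 else 0)) /
        ((if y 0 then (1 : ℝ) else 0) + (if y 1 then (1 : ℝ) else 0) + c1 + c2))

open Set

theorem softDiceRisk_eq (p1 p2 c1 c2 : ℝ) : softDiceRisk p1 p2 c1 c2 =
    1 - 2 * (p1 * p2 * (c1 + c2) / (2 + c1 + c2) +
      (p1 * (1 - p2) * c1 + (1 - p1) * p2 * c2) / (1 + c1 + c2)) := by
  rw [softDiceRisk, ← Equiv.sum_comp (piFinTwoEquiv fun _ => Bool).symm]
  simp only [Fintype.sum_prod_type, Fintype.sum_bool, piFinTwoEquiv_symm_apply,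
    Fin.cons_zero, Fin.cons_one, if_true, if_false, Bool.false_eq_true]
  ring

theorem softDiceRisk_swap (p1 p2 c1 c2 : ℝ) :
    softDiceRisk p1 p2 c1 c2 = softDiceRisk p2 p1 c2 c1 := by
  rw [softDiceRisk_eq, softDiceRisk_eq]
  ring

theorem hasDerivAt_mul_add_div_add (a b d : ℝ) {x : ℝ} (hx : x + d ≠ 0) :
    HasDerivAt (fun t => (a * t + b) / (t + d)) ((a * d - b) / (x + d) ^ 2) x := by
  have hnum : HasDerivAt (fun t => a * t + b) a x := by
    simpa using ((hasDerivAt_id x).const_mul a).add_const b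
  have hden : HasDerivAt (fun t => t + d) 1 x := (hasDerivAt_id x).add_const d
  exact (hnum.div hden hx).congr_deriv (by ring)

theorem hasDerivAt_softDiceRisk_left (p1 p2 c2 : ℝ) {c1 : ℝ} (h : -1 < c1 + c2) :
    HasDerivAt (fun t => softDiceRisk p1 p2 t c2)
      (-2 * (2 * p1 * p2 / (2 + c1 + c2) ^ 2 +
        (p1 * (1 - p2) + (p1 - p2) * c2) / (1 + c1 + c2) ^ 2)) c1 := by
  have hfun : (fun t => softDiceRisk p1 p2 t c2) = fun t =>
      1 - 2 * ((p1 * p2 * t + p1 * p2 * c2) / (t + (2 + c2)) +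
        (p1 * (1 - p2) * t + (1 - p1) * p2 * c2) / (t + (1 + c2))) := by
    funext t
    rw [softDiceRisk_eq]
    ring
  have hd2 : c1 + (2 + c2) ≠ 0 := ne_of_gt (by linarith)
  have hd1 : c1 + (1 + c2) ≠ 0 := ne_of_gt (by linarith)
  rw [hfun]
  exact (((hasDerivAt_mul_add_div_add _ _ _ hd2).add
    (hasDerivAt_mul_add_div_add _ _ _ hd1)).const_mul 2).const_sub 1 |>.congr_deriv (by ring)

theorem antitoneOn_softDiceRisk_left {p1 p2 c2 : ℝ} (hc2 : 0 ≤ c2) (hp : 0 ≤ p1 * p2)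
    (hnum : 0 ≤ p1 * (1 - p2) + (p1 - p2) * c2) :
    AntitoneOn (fun t => softDiceRisk p1 p2 t c2) (Ici 0) := by
  have hderiv : ∀ x ∈ Ici (0 : ℝ), HasDerivAt (fun t => softDiceRisk p1 p2 t c2)
      (-2 * (2 * p1 * p2 / (2 + x + c2) ^ 2 +
        (p1 * (1 - p2) + (p1 - p2) * c2) / (1 + x + c2) ^ 2)) x :=
    fun x hx => hasDerivAt_softDiceRisk_left p1 p2 c2 (by linarith [mem_Ici.1 hx])
  refine antitoneOn_of_hasDerivWithinAt_nonpos (convex_Ici 0)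
    (fun x hx => (hderiv x hx).continuousAt.continuousWithinAt)
    (fun x hx => (hderiv x (interior_subset hx)).hasDerivWithinAt) fun x _ => ?_
  refine mul_nonpos_of_nonpos_of_nonneg (by norm_num) (add_nonneg ?_ ?_)
  · exact div_nonneg (by linarith) (sq_nonneg _)
  · exact div_nonneg hnum (sq_nonneg _)

/-- **Soft-Dice gradient and its consequence.** For `(c₁, c₂) ∈ [0,1]²` with `c₁ + c₂ > 0`,
`∂L/∂c₁ = -2[2p₁p₂/(2+c₁+c₂)² + (p₁(1-p₂) + (p₁-p₂)c₂)/(1+c₁+c₂)²]`.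
Consequently, if `p₁ ≥ p₂` and `2p₂ - p₁ - p₁p₂ ≥ 0`, then `L` is nonincreasing in each
coordinate on `[0,1]²` and `(1,1)` minimizes `L` over `[0,1]²`. -/
theorem softDice_deriv_and_minimizer (p1 p2 : ℝ)
    (hp1 : p1 ∈ Set.Icc (0 : ℝ) 1) (hp2 : p2 ∈ Set.Icc (0 : ℝ) 1) :
    (∀ c1 c2 : ℝ, c1 ∈ Set.Icc (0 : ℝ) 1 → c2 ∈ Set.Icc (0 : ℝ) 1 → 0 < c1 + c2 →
        HasDerivAt (fun t => softDiceRisk p1 p2 t c2)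
          (-2 * (2 * p1 * p2 / (2 + c1 + c2) ^ 2 +
            (p1 * (1 - p2) + (p1 - p2) * c2) / (1 + c1 + c2) ^ 2)) c1) ∧
    ((p2 ≤ p1 ∧ 0 ≤ 2 * p2 - p1 - p1 * p2) →
      (∀ c2 ∈ Set.Icc (0 : ℝ) 1, ∀ c1 ∈ Set.Icc (0 : ℝ) 1, ∀ c1' ∈ Set.Icc (0 : ℝ) 1,
          c1 ≤ c1' → softDiceRisk p1 p2 c1' c2 ≤ softDiceRisk p1 p2 c1 c2) ∧
      (∀ c1 ∈ Set.Icc (0 : ℝ) 1, ∀ c2 ∈ Set.Icc (0 : ℝ) 1, ∀ c2' ∈ Set.Icc (0 : ℝ) 1,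
          c2 ≤ c2' → softDiceRisk p1 p2 c1 c2' ≤ softDiceRisk p1 p2 c1 c2) ∧
      (∀ c1 ∈ Set.Icc (0 : ℝ) 1, ∀ c2 ∈ Set.Icc (0 : ℝ) 1,
          softDiceRisk p1 p2 1 1 ≤ softDiceRisk p1 p2 c1 c2)) := by
  obtain ⟨hp1₀, hp1₁⟩ := hp1
  obtain ⟨hp2₀, hp2₁⟩ := hp2
  refine ⟨fun c1 c2 _ _ hpos => hasDerivAt_softDiceRisk_left p1 p2 c2 (by linarith), ?_⟩
  rintro ⟨hle, hgap⟩
  have anti1 : ∀ c2 ∈ Icc (0 : ℝ) 1,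
      AntitoneOn (fun t => softDiceRisk p1 p2 t c2) (Icc 0 1) := fun c2 hc2 =>
    (antitoneOn_softDiceRisk_left hc2.1 (mul_nonneg hp1₀ hp2₀) (by
      nlinarith [mul_nonneg hp1₀ (sub_nonneg.2 hp2₁), mul_nonneg (sub_nonneg.2 hle) hc2.1])).mono
      Icc_subset_Ici_self
  have anti2 : ∀ c1 ∈ Icc (0 : ℝ) 1,
      AntitoneOn (fun t => softDiceRisk p1 p2 c1 t) (Icc 0 1) := by
    intro c1 hc1
    simp only [softDiceRisk_swap p1 p2 c1]
    refine (antitoneOn_softDiceRisk_left hc1.1 (mul_nonneg hp2₀ hp1₀) ?_).mono Icc_subset_Ici_self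
    nlinarith [mul_nonneg (mul_nonneg (sub_nonneg.2 hc1.2) (sub_nonneg.2 hp1₁)) hp2₀,
      mul_nonneg hc1.1 hgap]
  have one_mem : (1 : ℝ) ∈ Icc (0 : ℝ) 1 := right_mem_Icc.2 zero_le_one
  refine ⟨fun c2 hc2 c1 hc1 c1' hc1' h => anti1 c2 hc2 hc1 hc1' h,
    fun c1 hc1 c2 hc2 c2' hc2' h => anti2 c1 hc1 hc2 hc2' h, fun c1 hc1 c2 hc2 => ?_⟩
  calc softDiceRisk p1 p2 1 1 ≤ softDiceRisk p1 p2 c1 1 := anti1 1 one_mem hc1 one_mem hc1.2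
    _ ≤ softDiceRisk p1 p2 c1 c2 := anti2 c1 hc1 hc2 one_mem hc2.2
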